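/- arXiv:1301.1881 — 3 statements merged into one kernel-verified Lean document; each statement's English description precedes it below -/
import Mathlib

section
/- Let (X,d) be a compact metric space, let {S_1,...,S_N} be an iterated function system of contracting self-maps on X, let C ⊆ X be a nonempty compact set, let F_∅ be the unique nonempty compact set with F_∅ = ⋃_{i=1}^N S_i(F_∅), let F_C be the unique nonempty compact set with F_C = ⋃_{i=1}^N S_i(F_C) ∪ C, and let 𝒪 = C ∪ ⋃_{k≥1} ⋃_{i_1,...,i_k ∈ {1,...,N}} (S_{i_1} ∘ ⋯ ∘ S_{i_k})(C) be the orbital set. Then F_C = F_∅ ∪ 𝒪 and F_C equals the closure of 𝒪. -/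
open Set Filter Topology Metric MeasureTheory

/-- Composition `S_{i_1} ∘ ⋯ ∘ S_{i_k}` of the maps of an IFS along a finite word. -/
def compList {X : Type*} {N : ℕ} (S : Fin N → X → X) : List (Fin N) → X → X
  | [] => id
  | i :: w => S i ∘ compList S w

/-!
Both `F_∅` and `F_C \ 𝒪` are covered by their own images under the `S_i` (for `F_C \ 𝒪` because
`𝒪` is forward invariant and contains `C`). So each of their points is, for every `n`, the image
of a point of the same bounded set under a word of length `n`, and hence lies within `Kⁿ · R` of
the image of any fixed reference point under that word, where `K < 1` bounds the Lipschitz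
constants. A reference point in `C` puts `F_∅` in the closure of `𝒪`; one in `F_∅` puts
`F_C \ 𝒪` in the closed set `F_∅`. As `F_C` is closed and contains `𝒪`, both identities follow.
-/

theorem exists_lipschitzWith_lt_one {ι X : Type*} [Finite ι] [PseudoEMetricSpace X]
    {S : ι → X → X} (hS : ∀ i, ∃ c : NNReal, c < 1 ∧ LipschitzWith c (S i)) :
    ∃ K : NNReal, K < 1 ∧ ∀ i, LipschitzWith K (S i) := by
  choose c hc1 hcS using hS
  have := Fintype.ofFinite ι
  exact ⟨Finset.univ.sup c, (Finset.sup_lt_iff zero_lt_one).mpr fun i _ => hc1 i,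
    fun i => (hcS i).weaken (Finset.le_sup (Finset.mem_univ i))⟩

namespace compList

variable {X : Type*} {N : ℕ} (S : Fin N → X → X)

def orbitalSet (C : Set X) : Set X := ⋃ w, compList S w '' C

variable {S}

theorem mapsTo {A : Set X} (hA : ∀ i, MapsTo (S i) A A) (w : List (Fin N)) :
    MapsTo (compList S w) A A := by
  induction w with
  | nil => exact mapsTo_id A
  | cons i w ih => exact (hA i).comp ih

theorem lipschitzWith [PseudoEMetricSpace X] {K : NNReal} (hS : ∀ i, LipschitzWith K (S i))
    (w : List (Fin N)) : LipschitzWith (K ^ w.length) (compList S w) := by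
  induction w with
  | nil => exact LipschitzWith.id.weaken (by simp)
  | cons i w ih => simpa [compList, pow_succ'] using (hS i).comp ih

theorem exists_eq_of_subset_iUnion_image {A : Set X} (hA : A ⊆ ⋃ i, S i '' A) (n : ℕ) :
    ∀ x ∈ A, ∃ w : List (Fin N), ∃ y ∈ A, w.length = n ∧ compList S w y = x := by
  induction n with
  | zero => exact fun x hx => ⟨[], x, hx, rfl, rfl⟩
  | succ n ih =>
    intro x hx
    obtain ⟨i, z, hz, rfl⟩ := mem_iUnion.mp (hA hx)
    obtain ⟨w, y, hy, rfl, rfl⟩ := ih z hz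
    exact ⟨i :: w, y, hy, rfl, rfl⟩

theorem subset_closure_of_subset_iUnion_image [PseudoMetricSpace X] {K : NNReal} (hK : K < 1)
    (hS : ∀ i, LipschitzWith K (S i)) {A T : Set X} (hA : A ⊆ ⋃ i, S i '' A)
    (hAb : Bornology.IsBounded A) {b : X} (hb : ∀ w, compList S w b ∈ T) :
    A ⊆ closure T := by
  intro x hx
  rw [Metric.mem_closure_iff]
  intro ε hε
  set R := diam (insert b A)
  have hR : ∀ y ∈ A, dist y b ≤ R := fun y hy =>
    dist_le_diam_of_mem (hAb.insert b) (mem_insert_of_mem b hy) (mem_insert b A)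
  have hKR : Tendsto (fun n : ℕ => (K : ℝ) ^ n * R) atTop (𝓝 0) := by
    simpa using (tendsto_pow_atTop_nhds_zero_of_lt_one K.coe_nonneg hK).mul_const R
  obtain ⟨n, hn⟩ := (hKR.eventually (gt_mem_nhds hε)).exists
  obtain ⟨w, y, hy, rfl, rfl⟩ := exists_eq_of_subset_iUnion_image hA n x hx
  refine ⟨compList S w b, hb w, lt_of_le_of_lt ?_ hn⟩
  calc dist (compList S w y) (compList S w b) ≤ (K : ℝ) ^ w.length * dist y b := by
        simpa using (lipschitzWith hS w).dist_le_mul y b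
    _ ≤ (K : ℝ) ^ w.length * R := by gcongr; exact hR y hy

theorem mem_orbitalSet {C : Set X} {c : X} (hc : c ∈ C) (w : List (Fin N)) :
    compList S w c ∈ orbitalSet S C :=
  mem_iUnion.mpr ⟨w, mem_image_of_mem _ hc⟩

theorem mapsTo_orbitalSet (C : Set X) (i : Fin N) :
    MapsTo (S i) (orbitalSet S C) (orbitalSet S C) := by
  rintro _ ⟨_, ⟨w, rfl⟩, c, hc, rfl⟩
  exact mem_orbitalSet hc (i :: w)

theorem orbitalSet_subset {A C : Set X} (hCA : C ⊆ A) (hA : ∀ i, MapsTo (S i) A A) :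
    orbitalSet S C ⊆ A :=
  iUnion_subset fun w => (image_mono hCA).trans (mapsTo hA w).image_subset

theorem union_image_ne_nil_eq_orbitalSet (C : Set X) :
    C ∪ ⋃ w ∈ {w : List (Fin N) | w ≠ []}, compList S w '' C = orbitalSet S C := by
  refine subset_antisymm (union_subset ?_ ?_) (iUnion_subset fun w => ?_)
  · exact fun c hc => mem_orbitalSet hc []
  · exact iUnion₂_subset fun w _ => subset_iUnion (fun w => compList S w '' C) w
  · rcases eq_or_ne w [] with rfl | hw
    · simp [compList]
    · exact subset_union_of_subset_right
        (subset_biUnion_of_mem (u := fun w => compList S w '' C) hw) _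

theorem diff_orbitalSet_subset_iUnion_image {A C : Set X} (hA : A ⊆ (⋃ i, S i '' A) ∪ C) :
    A \ orbitalSet S C ⊆ ⋃ i, S i '' (A \ orbitalSet S C) := by
  rintro x ⟨hxA, hxO⟩
  rcases hA hxA with hx | hxC
  · obtain ⟨i, z, hz, rfl⟩ := mem_iUnion.mp hx
    exact mem_iUnion.mpr ⟨i, z, ⟨hz, fun hzO => hxO (mapsTo_orbitalSet C i hzO)⟩, rfl⟩
  · exact absurd (mem_orbitalSet hxC []) hxO

end compList

open compList in
theorem inhomogeneous_attractor_eq_union_orbital_general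
    {X : Type*} [MetricSpace X] {N : ℕ}
    (S : Fin N → X → X)
    (hS : ∀ i, ∃ c : NNReal, c < 1 ∧ LipschitzWith c (S i))
    (C : Set X) (hCne : C.Nonempty)
    (F0 : Set X) (hF0c : IsCompact F0) (hF0ne : F0.Nonempty)
    (hF0 : F0 = ⋃ i, S i '' F0)
    (FC : Set X) (hFCc : IsCompact FC)
    (hFC : FC = (⋃ i, S i '' FC) ∪ C)
    (O : Set X)
    (hO : O = C ∪ ⋃ w ∈ {w : List (Fin N) | w ≠ []}, compList S w '' C) :
    FC = F0 ∪ O ∧ FC = closure O := by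
  obtain ⟨K, hK, hKS⟩ := exists_lipschitzWith_lt_one hS
  obtain ⟨c, hc⟩ := hCne
  obtain ⟨z, hz⟩ := hF0ne
  rw [union_image_ne_nil_eq_orbitalSet] at hO
  subst hO
  have hFC_inv : ∀ i, MapsTo (S i) FC FC := fun i =>
    mapsTo_iff_image_subset.mpr (iUnion_subset_iff.mp (hFC ▸ subset_union_left) i)
  have hO_FC : orbitalSet S C ⊆ FC := orbitalSet_subset (hFC ▸ subset_union_right) hFC_inv
  have hclO_FC : closure (orbitalSet S C) ⊆ FC := closure_minimal hO_FC hFCc.isClosed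
  have hF0_clO : F0 ⊆ closure (orbitalSet S C) :=
    subset_closure_of_subset_iUnion_image hK hKS hF0.le hF0c.isBounded (mem_orbitalSet hc)
  have hFC_diff : FC \ orbitalSet S C ⊆ F0 := by
    have hF0_inv : ∀ i, MapsTo (S i) F0 F0 := fun i =>
      mapsTo_iff_image_subset.mpr (iUnion_subset_iff.mp hF0.ge i)
    rw [← hF0c.isClosed.closure_eq]
    exact subset_closure_of_subset_iUnion_image hK hKS
      (diff_orbitalSet_subset_iUnion_image hFC.le) (hFCc.isBounded.subset sdiff_subset)
      (fun w => mapsTo hF0_inv w hz)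
  have hFC_eq : FC = F0 ∪ orbitalSet S C :=
    subset_antisymm ((sdiff_subset_iff.mp hFC_diff).trans (union_comm _ _).le)
      (union_subset (hF0_clO.trans hclO_FC) hO_FC)
  exact ⟨hFC_eq, subset_antisymm (hFC_eq ▸ union_subset hF0_clO subset_closure) hclO_FC⟩

theorem inhomogeneous_attractor_eq_union_orbital
    {X : Type*} [MetricSpace X] [CompactSpace X] {N : ℕ} (hN : 0 < N)
    (S : Fin N → X → X)
    (hS : ∀ i, ∃ c : NNReal, c < 1 ∧ LipschitzWith c (S i))
    (C : Set X) (hC : IsCompact C) (hCne : C.Nonempty)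
    (F0 : Set X) (hF0c : IsCompact F0) (hF0ne : F0.Nonempty)
    (hF0 : F0 = ⋃ i, S i '' F0)
    (FC : Set X) (hFCc : IsCompact FC) (hFCne : FC.Nonempty)
    (hFC : FC = (⋃ i, S i '' FC) ∪ C)
    (O : Set X)
    (hO : O = C ∪ ⋃ w ∈ {w : List (Fin N) | w ≠ []}, compList S w '' C) :
    FC = F0 ∪ O ∧ FC = closure O :=
  inhomogeneous_attractor_eq_union_orbital_general S hS C hCne F0 hF0c hF0ne hF0 FC hFCc hFC O hO
end

section
/- Let (X,d) be a compact metric space, let {S_1,...,S_N} be an IFS of contracting similarities on X with similarity dimension s, let C ⊆ X be a nonempty compact set, and let F_C be the inhomogeneous attractor with condensation C. If the box dimension of C exists (i.e., lower and upper box dimensions of C coincide) and dim_B C ≥ s, then the box dimension of F_C exists and equals dim_B C. -/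
/-!
Iterating `F = ⋃ i, Sᵢ F ∪ C` and stopping each branch once its contraction ratio drops below
`δ` covers `F` by images of `F` of ratio in `[ρδ, δ)` (`ρ = min rᵢ`), each covered by `N₁(F)`
sets, and images of `C` of ratio `q ≥ δ`, each covered by `N_{δ/q}(C)` sets. All branches stop
within `O(log 1/δ)` generations, and in each generation `∑ q^t ≤ 1` for `t ≥ s`. So the first
family has `O(log(1/δ) δ^{-s})` members, and if `N_ε(C) ≤ c ε^{-t}` the second is covered by
`O(c log(1/δ) δ^{-t})` sets. Hence `N_δ(F) ≲ log(1/δ) δ^{-t}` for every `t > dim_B C ≥ s`, while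
`C ⊆ F` gives the reverse inequality.
-/

open Set Filter Topology Metric MeasureTheory

/-- Minimum number of sets of diameter at most `δ` needed to cover `F`. -/
noncomputable def coverN {X : Type*} [MetricSpace X] (F : Set X) (δ : ℝ) : ℕ :=
  sInf {n : ℕ | ∃ U : Fin n → Set X, (∀ i, EMetric.diam (U i) ≤ ENNReal.ofReal δ) ∧ F ⊆ ⋃ i, U i}

/-- Lower box dimension. -/
noncomputable def lbDim {X : Type*} [MetricSpace X] (F : Set X) : ℝ :=
  Filter.liminf (fun δ : ℝ => Real.log (coverN F δ) / (-Real.log δ)) (𝓝[>] 0)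

/-- Upper box dimension. -/
noncomputable def ubDim {X : Type*} [MetricSpace X] (F : Set X) : ℝ :=
  Filter.limsup (fun δ : ℝ => Real.log (coverN F δ) / (-Real.log δ)) (𝓝[>] 0)

section CoverN

variable {X : Type*} [MetricSpace X] {F G : Set X} {δ ε : ℝ}

lemma card_mem_setOf_cover {ι : Type*} [Fintype ι] (U : ι → Set X)
    (hU : ∀ i, ediam (U i) ≤ ENNReal.ofReal δ) (hF : F ⊆ ⋃ i, U i) :
    Fintype.card ι ∈
      {n : ℕ | ∃ U : Fin n → Set X, (∀ i, ediam (U i) ≤ ENNReal.ofReal δ) ∧ F ⊆ ⋃ i, U i} := by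
  let e := Fintype.equivFin ι
  refine ⟨U ∘ e.symm, fun i => hU _, ?_⟩
  rwa [Function.comp_def, e.symm.surjective.iUnion_comp U]

lemma coverN_le_card {ι : Type*} [Fintype ι] (U : ι → Set X)
    (hU : ∀ i, ediam (U i) ≤ ENNReal.ofReal δ) (hF : F ⊆ ⋃ i, U i) :
    coverN F δ ≤ Fintype.card ι :=
  Nat.sInf_le (card_mem_setOf_cover U hU hF)

variable [CompactSpace X]

lemma exists_cover_card_coverN (F : Set X) (hδ : 0 < δ) :
    ∃ U : Fin (coverN F δ) → Set X, (∀ i, ediam (U i) ≤ ENNReal.ofReal δ) ∧ F ⊆ ⋃ i, U i := by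
  obtain ⟨t, -, ht, hcover⟩ := finite_cover_balls_of_compact (isCompact_univ (X := X)) (half_pos hδ)
  have := ht.fintype
  refine Nat.sInf_mem ⟨_, card_mem_setOf_cover (fun x : t => ball (x : X) (δ / 2))
    (fun x => ediam_le_of_forall_dist_le fun y hy z hz => ?_) fun y _ => ?_⟩
  · linarith [dist_triangle_right y z (x : X), mem_ball.1 hy, mem_ball.1 hz]
  · simpa using hcover (mem_univ y)

lemma coverN_mono (hFG : F ⊆ G) (hδ : 0 < δ) : coverN F δ ≤ coverN G δ := by
  obtain ⟨U, hU, hG⟩ := exists_cover_card_coverN G hδ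
  simpa using coverN_le_card U hU (hFG.trans hG)

lemma coverN_anti (hε : 0 < ε) (hεδ : ε ≤ δ) : coverN F δ ≤ coverN F ε := by
  obtain ⟨U, hU, hF⟩ := exists_cover_card_coverN F hε
  simpa using coverN_le_card U (fun i => (hU i).trans (ENNReal.ofReal_le_ofReal hεδ)) hF

lemma coverN_pos (hF : F.Nonempty) (hδ : 0 < δ) : 0 < coverN F δ := by
  obtain ⟨U, -, hFU⟩ := exists_cover_card_coverN F hδ
  obtain ⟨i, -⟩ := mem_iUnion.1 (hFU hF.some_mem)
  exact i.pos

lemma coverN_union_le (hδ : 0 < δ) : coverN (F ∪ G) δ ≤ coverN F δ + coverN G δ := by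
  obtain ⟨U, hU, hFU⟩ := exists_cover_card_coverN F hδ
  obtain ⟨V, hV, hGV⟩ := exists_cover_card_coverN G hδ
  simpa using coverN_le_card (Sum.elim U V) (Sum.forall.2 ⟨hU, hV⟩)
    (by rw [iUnion_sumElim]; exact union_subset_union hFU hGV)

lemma coverN_biUnion_le {ι : Type*} (A : Finset ι) (T : ι → Set X) (hδ : 0 < δ) :
    coverN (⋃ i ∈ A, T i) δ ≤ ∑ i ∈ A, coverN (T i) δ := by
  choose U hU hTU using fun i : A => exists_cover_card_coverN (T i) hδ
  have := coverN_le_card (F := ⋃ i ∈ A, T i)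
    (fun p : Σ i : A, Fin (coverN (T i) δ) => U p.1 p.2) (fun p => hU _ _) ?_
  · simpa [Finset.sum_attach A (fun i => coverN (T i) δ)] using this
  · simp only [iUnion_subset_iff]
    intro i hi x hx
    obtain ⟨j, hj⟩ := mem_iUnion.1 (hTU ⟨i, hi⟩ hx)
    exact mem_iUnion.2 ⟨⟨⟨i, hi⟩, j⟩, hj⟩

lemma coverN_image_le {g : X → X} {ρ : ℝ} (hρ : 0 ≤ ρ)
    (hg : ∀ x y, dist (g x) (g y) ≤ ρ * dist x y) (hε : 0 < ε) :
    coverN (g '' F) (ρ * ε) ≤ coverN F ε := by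
  have hlip : LipschitzWith ρ.toNNReal g :=
    LipschitzWith.of_dist_le_mul fun x y => by rw [Real.coe_toNNReal _ hρ]; exact hg x y
  obtain ⟨U, hU, hF⟩ := exists_cover_card_coverN F hε
  refine (coverN_le_card (fun i => g '' U i) (fun i => ?_) ?_).trans_eq (Fintype.card_fin _)
  · calc ediam (g '' U i) ≤ ρ.toNNReal * ediam (U i) := hlip.ediam_image_le (U i)
      _ ≤ ENNReal.ofReal ρ * ENNReal.ofReal ε := by gcongr; exacts [le_rfl, hU i]
      _ = ENNReal.ofReal (ρ * ε) := (ENNReal.ofReal_mul hρ).symm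
  · rw [← image_iUnion]
    exact image_mono hF

end CoverN

section Words

variable {ι : Type*}

def wordRatio (r : ι → ℝ) (w : List ι) : ℝ := (w.map r).prod

/-- Letters act from the right, so that refining the piece `wordMap S w '' F` conses a letter
onto `w`. -/
def wordMap {X : Type*} (S : ι → X → X) (w : List ι) : X → X :=
  w.foldr (fun i g => g ∘ S i) id

variable (ι) in
def words [Fintype ι] (k : ℕ) : Finset (List ι) :=
  (Finset.univ : Finset (Fin k → ι)).map ⟨List.ofFn, List.ofFn_injective⟩

variable {r : ι → ℝ} {w : List ι}

@[simp] lemma wordRatio_nil : wordRatio r [] = 1 := rfl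

@[simp] lemma wordRatio_cons (i : ι) (w : List ι) :
    wordRatio r (i :: w) = r i * wordRatio r w := List.prod_cons

@[simp] lemma wordMap_nil {X : Type*} (S : ι → X → X) : wordMap S [] = id := rfl

@[simp] lemma wordMap_cons {X : Type*} (S : ι → X → X) (i : ι) (w : List ι) :
    wordMap S (i :: w) = wordMap S w ∘ S i := rfl

lemma wordRatio_pos (hr : ∀ i, 0 < r i) (w : List ι) : 0 < wordRatio r w :=
  List.prod_pos fun _ ha => by obtain ⟨i, -, rfl⟩ := List.mem_map.1 ha; exact hr i

lemma wordRatio_nonneg (hr : ∀ i, 0 ≤ r i) (w : List ι) : 0 ≤ wordRatio r w :=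
  List.prod_nonneg fun _ ha => by obtain ⟨i, -, rfl⟩ := List.mem_map.1 ha; exact hr i

lemma wordRatio_le_pow {R : ℝ} (hr : ∀ i, 0 ≤ r i) (hR : ∀ i, r i ≤ R) (w : List ι) :
    wordRatio r w ≤ R ^ w.length := by
  induction w with
  | nil => simp
  | cons i w ih =>
    rw [wordRatio_cons, List.length_cons, pow_succ']
    exact mul_le_mul (hR i) ih (wordRatio_nonneg hr w) ((hr i).trans (hR i))

lemma dist_wordMap {X : Type*} [MetricSpace X] {S : ι → X → X}
    (hS : ∀ i x y, dist (S i x) (S i y) = r i * dist x y) (w : List ι) (x y : X) :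
    dist (wordMap S w x) (wordMap S w y) = wordRatio r w * dist x y := by
  induction w generalizing x y with
  | nil => simp
  | cons i w ih => simp [ih, hS, mul_left_comm, mul_assoc]

variable [Fintype ι]

lemma mem_words {k : ℕ} : w ∈ words ι k ↔ w.length = k := by
  constructor
  · intro hw
    obtain ⟨f, -, rfl⟩ := Finset.mem_map.1 hw
    simp
  · rintro rfl
    exact Finset.mem_map.2 ⟨w.get, Finset.mem_univ _, List.ofFn_get w⟩

lemma sum_words_wordRatio_rpow (hr : ∀ i, 0 ≤ r i) (t : ℝ) (k : ℕ) :
    ∑ w ∈ words ι k, wordRatio r w ^ t = (∑ i, r i ^ t) ^ k := by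
  rw [Fintype.sum_pow, words, Finset.sum_map]
  refine Finset.sum_congr rfl fun f _ => ?_
  simp only [Function.Embedding.coeFn_mk, wordRatio, List.map_ofFn, List.prod_ofFn]
  exact Real.finsetProd_rpow _ _ (fun i _ => hr (f i)) t |>.symm

lemma sum_wordRatio_rpow_le (hr : ∀ i, 0 ≤ r i) {t : ℝ} (ht : ∑ i, r i ^ t ≤ 1)
    {n : ℕ} (P : Finset (List ι)) (hP : ∀ w ∈ P, w.length < n) :
    ∑ w ∈ P, wordRatio r w ^ t ≤ n := by
  rw [← Finset.sum_fiberwise_of_maps_to (g := List.length) (t := Finset.range n)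
    fun w hw => Finset.mem_range.2 (hP w hw)]
  calc ∑ j ∈ Finset.range n, ∑ w ∈ P with w.length = j, wordRatio r w ^ t
      ≤ ∑ j ∈ Finset.range n, ∑ w ∈ words ι j, wordRatio r w ^ t := by
        refine Finset.sum_le_sum fun j _ => ?_
        refine Finset.sum_le_sum_of_subset_of_nonneg (fun w hw => ?_) fun w _ _ => ?_
        · exact mem_words.2 (Finset.mem_filter.1 hw).2
        · exact Real.rpow_nonneg (wordRatio_nonneg hr w) t
    _ ≤ ∑ j ∈ Finset.range n, 1 := by
        gcongr with j
        rw [sum_words_wordRatio_rpow hr]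
        exact pow_le_one₀ (Finset.sum_nonneg fun i _ => Real.rpow_nonneg (hr i) t) ht
    _ = n := by simp

lemma card_mul_rpow_le (hr : ∀ i, 0 ≤ r i) {t a : ℝ} (ht : ∑ i, r i ^ t ≤ 1) (ht0 : 0 ≤ t)
    (ha : 0 ≤ a) {n : ℕ} (P : Finset (List ι)) (hP : ∀ w ∈ P, w.length < n ∧ a ≤ wordRatio r w) :
    P.card * a ^ t ≤ n := by
  calc P.card * a ^ t = ∑ w ∈ P, a ^ t := by simp
    _ ≤ ∑ w ∈ P, wordRatio r w ^ t :=
      Finset.sum_le_sum fun w hw => Real.rpow_le_rpow ha (hP w hw).2 ht0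
    _ ≤ n := sum_wordRatio_rpow_le hr ht P fun w hw => (hP w hw).1

end Words

lemma nonneg_of_sum_rpow_eq_one {ι : Type*} [Fintype ι] {r : ι → ℝ} (hr : ∀ i, r i ∈ Ioo 0 1)
    {s : ℝ} (hs : ∑ i, r i ^ s = 1) : 0 ≤ s := by
  obtain ⟨i, -, -⟩ := Finset.exists_ne_zero_of_sum_ne_zero (hs.trans_ne one_ne_zero)
  by_contra! hs0
  have := Finset.single_le_sum (fun j _ => Real.rpow_nonneg (hr j).1.le s) (Finset.mem_univ i)
  linarith [Real.one_lt_rpow_of_pos_of_lt_one_of_neg (hr i).1 (hr i).2 hs0]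

lemma exists_pow_lt_and_le_logb_add_one {R δ : ℝ} (hR : R ∈ Ioo 0 1) (hδ : δ ∈ Ioo 0 1) :
    ∃ K : ℕ, R ^ K < δ ∧ (K : ℝ) ≤ Real.logb R δ + 1 := by
  refine ⟨⌊Real.logb R δ⌋₊ + 1, ?_, ?_⟩
  · rw [← Real.rpow_natCast]
    calc R ^ ((⌊Real.logb R δ⌋₊ + 1 : ℕ) : ℝ) < R ^ Real.logb R δ :=
          Real.rpow_lt_rpow_of_exponent_gt hR.1 hR.2 (by push_cast; exact Nat.lt_floor_add_one _)
      _ = δ := Real.rpow_logb hR.1 hR.2.ne hδ.1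
  · push_cast
    linarith [Nat.floor_le (Real.logb_nonneg_of_base_lt_one hR.1 hR.2 hδ.1 hδ.2.le)]

lemma tendsto_log_mul_logb_add_div_neg_log {A R : ℝ} (hA : 0 < A) (hR : R ∈ Ioo 0 1) (b : ℝ) :
    Tendsto (fun δ => Real.log (A * (Real.logb R δ + b)) / (-Real.log δ)) (𝓝[>] 0) (𝓝 0) := by
  have hlogR : Real.log R < 0 := Real.log_neg hR.1 hR.2
  have hx : Tendsto (fun δ => A * (Real.logb R δ + b)) (𝓝[>] 0) atTop :=
    (tendsto_atTop_add_const_right _ b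
      (Real.tendsto_logb_nhdsGT_zero_of_base_lt_one hR.1 hR.2)).const_mul_atTop hA
  have := (Real.tendsto_pow_log_div_mul_add_atTop (-Real.log R / A) (b * Real.log R) 1
    (div_ne_zero (neg_ne_zero.2 hlogR.ne) hA.ne')).comp hx
  refine this.congr fun δ => ?_
  simp only [Function.comp_apply, pow_one, Real.logb]
  congr 1
  field_simp [hlogR.ne]
  ring

lemma Real.sSup_eq_of_subset_of_forall_sub_mem {A B : Set ℝ} (hAB : A ⊆ B)
    (hBA : ∀ η > 0, ∀ b ∈ B, b - η ∈ A) : sSup A = sSup B := by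
  by_cases hB : BddAbove B
  · rcases B.eq_empty_or_nonempty with rfl | ⟨b, hb⟩
    · rw [subset_empty_iff.1 hAB]
    refine le_antisymm (csSup_le_csSup hB ⟨_, hBA 1 one_pos b hb⟩ hAB) ?_
    refine le_of_forall_pos_le_add fun η hη => csSup_le ⟨b, hb⟩ fun b' hb' => ?_
    linarith [le_csSup (hB.mono hAB) (hBA η hη b' hb')]
  · have hA : ¬BddAbove A := fun ⟨M, hM⟩ =>
      hB ⟨M + 1, fun b hb => by linarith [hM (hBA 1 one_pos b hb)]⟩
    rw [Real.sSup_of_not_bddAbove hA, Real.sSup_of_not_bddAbove hB]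

section LiminfLimsup

variable {α : Type*} {l : Filter α} {f g : α → ℝ}

lemma liminf_eq_of_le_of_le_add (hfg : ∀ᶠ x in l, f x ≤ g x)
    (hgf : ∀ η > 0, ∀ᶠ x in l, g x ≤ f x + η) : liminf g l = liminf f l := by
  simp only [liminf_eq]
  refine (Real.sSup_eq_of_subset_of_forall_sub_mem ?_ fun η hη a ha => ?_).symm
  · exact fun a ha => ha.mp (hfg.mono fun x hx ha => ha.trans hx)
  · exact (ha.and (hgf η hη)).mono fun x ⟨hax, hx⟩ => by linarith

lemma limsup_eq_of_le_of_le_add (hfg : ∀ᶠ x in l, f x ≤ g x)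
    (hgf : ∀ η > 0, ∀ᶠ x in l, g x ≤ f x + η) : limsup g l = limsup f l := by
  simp only [limsup_eq, Real.sInf_def]
  congr 1
  refine Real.sSup_eq_of_subset_of_forall_sub_mem (fun a ha => ?_) fun η hη a ha => ?_
  · exact (mem_neg.1 ha).mp (hfg.mono fun x hx ha => hx.trans ha)
  · exact (ha.and (hgf η hη)).mono fun x ⟨hax, hx⟩ => by
      simp only [neg_sub]; linarith

lemma Real.limsup_eq_zero_of_not_isBoundedUnder (hf : ¬IsBoundedUnder (· ≤ ·) l f) :
    limsup f l = 0 := by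
  have : {a | ∀ᶠ x in l, f x ≤ a} = ∅ := eq_empty_of_forall_notMem fun a ha => hf ⟨a, ha⟩
  rw [limsup_eq, this, Real.sInf_empty]

lemma liminf_eq_limsup_of_le_of_eventually_le [l.NeBot] (hfb : IsBoundedUnder (· ≥ ·) l f)
    (hf : liminf f l = limsup f l) (hfg : ∀ᶠ x in l, f x ≤ g x)
    (hg : ∀ u > limsup f l, ∀ᶠ x in l, g x ≤ u) :
    liminf g l = limsup g l ∧ limsup g l = limsup f l := by
  have hgb : IsBoundedUnder (· ≥ ·) l g := hfb.mono_ge hfg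
  have hgB : IsBoundedUnder (· ≤ ·) l g := ⟨_, hg _ (lt_add_one _)⟩
  have h₁ : limsup g l ≤ limsup f l :=
    le_of_forall_gt_imp_ge_of_dense fun u hu => limsup_le_of_le hgb.isCoboundedUnder_flip (hg u hu)
  have h₂ : liminf f l ≤ liminf g l := liminf_le_liminf hfg hfb hgB.isCoboundedUnder_flip
  have h₃ : liminf g l ≤ limsup g l := liminf_le_limsup hgB hgb
  constructor <;> linarith

end LiminfLimsup

section BoxRatio

variable {X : Type*} [MetricSpace X] {F G : Set X} {δ t : ℝ}

noncomputable def boxRatio (F : Set X) (δ : ℝ) : ℝ := Real.log (coverN F δ) / (-Real.log δ)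

lemma lbDim_eq_liminf_boxRatio (F : Set X) : lbDim F = liminf (boxRatio F) (𝓝[>] 0) := rfl

lemma ubDim_eq_limsup_boxRatio (F : Set X) : ubDim F = limsup (boxRatio F) (𝓝[>] 0) := rfl

lemma coverN_le_rpow_of_boxRatio_le (hδ : δ ∈ Ioo 0 1) (h : boxRatio F δ ≤ t) :
    (coverN F δ : ℝ) ≤ δ ^ (-t) := by
  rcases (coverN F δ).eq_zero_or_pos with h0 | h0
  · rw [h0, Nat.cast_zero]
    exact Real.rpow_nonneg hδ.1.le _
  have hlog : 0 < -Real.log δ := neg_pos.2 (Real.log_neg hδ.1 hδ.2)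
  rw [boxRatio, div_le_iff₀ hlog] at h
  calc (coverN F δ : ℝ) = Real.exp (Real.log (coverN F δ)) := (Real.exp_log (by positivity)).symm
    _ ≤ Real.exp (Real.log δ * -t) := Real.exp_le_exp.2 (by linarith)
    _ = δ ^ (-t) := (Real.rpow_def_of_pos hδ.1 _).symm

lemma boxRatio_le_of_coverN_le {B : ℝ} (hδ : δ ∈ Ioo 0 1) (hN : 0 < coverN F δ) (hB : 0 < B)
    (h : (coverN F δ : ℝ) ≤ B * δ ^ (-t)) : boxRatio F δ ≤ t + Real.log B / (-Real.log δ) := by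
  have hlog : Real.log δ < 0 := Real.log_neg hδ.1 hδ.2
  calc boxRatio F δ ≤ Real.log (B * δ ^ (-t)) / (-Real.log δ) := by
        unfold boxRatio
        gcongr
        linarith
    _ = t + Real.log B / (-Real.log δ) := by
        rw [Real.log_mul hB.ne' (Real.rpow_pos_of_pos hδ.1 _).ne', Real.log_rpow hδ.1]
        field_simp [hlog.ne]
        ring

lemma eventually_boxRatio_nonneg (F : Set X) : ∀ᶠ δ in 𝓝[>] 0, 0 ≤ boxRatio F δ := by
  filter_upwards [Ioo_mem_nhdsGT one_pos] with δ hδ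
  exact div_nonneg (Real.log_natCast_nonneg _) (neg_nonneg.2 (Real.log_nonpos hδ.1.le hδ.2.le))

variable [CompactSpace X]

lemma eventually_boxRatio_le_of_subset (hF : F.Nonempty) (hFG : F ⊆ G) :
    ∀ᶠ δ in 𝓝[>] 0, boxRatio F δ ≤ boxRatio G δ := by
  filter_upwards [Ioo_mem_nhdsGT one_pos] with δ hδ
  have hN : (0 : ℝ) < coverN F δ := by exact_mod_cast coverN_pos hF hδ.1
  exact div_le_div_of_nonneg_right (Real.log_le_log hN (by exact_mod_cast coverN_mono hFG hδ.1))
    (neg_nonneg.2 (Real.log_nonpos hδ.1.le hδ.2.le))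

lemma exists_coverN_le_mul_rpow (ht : 0 ≤ t) (h : ∀ᶠ δ in 𝓝[>] 0, boxRatio F δ ≤ t) :
    ∃ c, 1 ≤ c ∧ ∀ ε ∈ Ioc 0 1, (coverN F ε : ℝ) ≤ c * ε ^ (-t) := by
  obtain ⟨δ₀, hδ₀, hsub⟩ := mem_nhdsGT_iff_exists_Ioo_subset.1 (h.and (Ioo_mem_nhdsGT one_pos))
  refine ⟨max 1 (coverN F δ₀ : ℝ), le_max_left _ _, fun ε hε => ?_⟩
  have hεt : 1 ≤ ε ^ (-t) := Real.one_le_rpow_of_pos_of_le_one_of_nonpos hε.1 hε.2 (by linarith)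
  rcases lt_or_ge ε δ₀ with hεδ | hεδ
  · obtain ⟨hεF, hε1⟩ := hsub ⟨hε.1, hεδ⟩
    exact (coverN_le_rpow_of_boxRatio_le hε1 hεF).trans
      (le_mul_of_one_le_left (by linarith) (le_max_left _ _))
  · calc (coverN F ε : ℝ) ≤ coverN F δ₀ := by exact_mod_cast coverN_anti hδ₀ hεδ
      _ ≤ max 1 (coverN F δ₀ : ℝ) := le_max_right _ _
      _ ≤ max 1 (coverN F δ₀ : ℝ) * ε ^ (-t) := le_mul_of_one_le_right (by positivity) hεt

end BoxRatio

section Attractor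

variable {X : Type*} {ι : Type*} {S : ι → X → X} {r : ι → ℝ} {C F : Set X}

lemma exists_word_of_mem_of_eq_union (hF : F = (⋃ i, S i '' F) ∪ C) {ρ δ : ℝ} (hρ : 0 ≤ ρ)
    (hρr : ∀ i, ρ ≤ r i) (hδ : 0 < δ) (hδ1 : δ ≤ 1) {x : X} (hx : x ∈ F) (k : ℕ) :
    (∃ w : List ι, w.length ≤ k ∧ ρ * δ ≤ wordRatio r w ∧ wordRatio r w < δ ∧
        x ∈ wordMap S w '' F) ∨
      (∃ w : List ι, w.length = k ∧ δ ≤ wordRatio r w ∧ x ∈ wordMap S w '' F) ∨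
      ∃ w : List ι, w.length < k ∧ δ ≤ wordRatio r w ∧ x ∈ wordMap S w '' C := by
  induction k with
  | zero => exact Or.inr (Or.inl ⟨[], rfl, by simpa using hδ1, x, hx, rfl⟩)
  | succ k ih =>
    rcases ih with ⟨w, hw, hρw, hwδ, hxw⟩ | ⟨w, hw, hδw, y, hy, rfl⟩ | ⟨w, hw, hδw, hxw⟩
    · exact Or.inl ⟨w, by omega, hρw, hwδ, hxw⟩
    · rw [hF] at hy
      rcases hy with hy | hy
      · obtain ⟨i, z, hz, rfl⟩ : ∃ i, ∃ z ∈ F, S i z = y := by simpa using hy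
        have hxi : wordMap S w (S i z) ∈ wordMap S (i :: w) '' F := ⟨z, hz, rfl⟩
        have hlen : (i :: w).length = k + 1 := by simp [hw]
        by_cases hδi : δ ≤ wordRatio r (i :: w)
        · exact Or.inr (Or.inl ⟨i :: w, hlen, hδi, hxi⟩)
        · refine Or.inl ⟨i :: w, hlen.le, ?_, not_le.1 hδi, hxi⟩
          rw [wordRatio_cons]
          exact mul_le_mul (hρr i) hδw hδ.le (hρ.trans (hρr i))
      · exact Or.inr (Or.inr ⟨w, by omega, hδw, y, hy, rfl⟩)
    · exact Or.inr (Or.inr ⟨w, by omega, hδw, hxw⟩)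

lemma exists_finset_subset_biUnion_wordMap [Fintype ι] (hr : ∀ i, 0 ≤ r i)
    (hF : F = (⋃ i, S i '' F) ∪ C) {ρ R δ : ℝ} (hρ : 0 ≤ ρ) (hρr : ∀ i, ρ ≤ r i)
    (hrR : ∀ i, r i ≤ R) (hδ : 0 < δ) (hδ1 : δ ≤ 1) {K : ℕ} (hRK : R ^ K < δ) :
    ∃ D P : Finset (List ι),
      (∀ w ∈ D, w.length < K + 1 ∧ ρ * δ ≤ wordRatio r w ∧ wordRatio r w < δ) ∧
      (∀ w ∈ P, w.length < K ∧ δ ≤ wordRatio r w) ∧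
      F ⊆ (⋃ w ∈ D, wordMap S w '' F) ∪ ⋃ w ∈ P, wordMap S w '' C := by
  classical
  refine ⟨((Finset.range (K + 1)).biUnion (words ι)).filter
      fun w => ρ * δ ≤ wordRatio r w ∧ wordRatio r w < δ,
    ((Finset.range K).biUnion (words ι)).filter fun w => δ ≤ wordRatio r w,
    fun w hw => by simpa [mem_words] using hw, fun w hw => by simpa [mem_words] using hw,
    fun x hx => ?_⟩
  rcases exists_word_of_mem_of_eq_union hF hρ hρr hδ hδ1 hx K with
    ⟨w, hw, hρw, hwδ, hxw⟩ | ⟨w, rfl, hδw, -⟩ | ⟨w, hw, hδw, hxw⟩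
  · exact Or.inl (mem_biUnion (by simp [mem_words, hρw, hwδ]; omega) hxw)
  · exact absurd ((wordRatio_le_pow hr hrR w).trans_lt hRK) hδw.not_gt
  · exact Or.inr (mem_biUnion (by simp [mem_words, hδw, hw]) hxw)

variable [MetricSpace X] [CompactSpace X]

lemma coverN_wordMap_image_le (hr : ∀ i, 0 < r i)
    (hS : ∀ i x y, dist (S i x) (S i y) = r i * dist x y) (A : Set X) (w : List ι) {δ : ℝ}
    (hδ : 0 < δ) : coverN (wordMap S w '' A) δ ≤ coverN A (δ / wordRatio r w) := by
  have hw := wordRatio_pos hr w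
  have := coverN_image_le (F := A) hw.le (fun x y => (dist_wordMap hS w x y).le) (div_pos hδ hw)
  rwa [mul_div_cancel₀ _ hw.ne'] at this

lemma coverN_biUnion_wordMap_le_card_mul (hr : ∀ i, 0 < r i)
    (hS : ∀ i x y, dist (S i x) (S i y) = r i * dist x y) (A : Set X) (D : Finset (List ι))
    {δ : ℝ} (hδ : 0 < δ) (hD : ∀ w ∈ D, wordRatio r w ≤ δ) :
    coverN (⋃ w ∈ D, wordMap S w '' A) δ ≤ D.card * coverN A 1 := by
  refine (coverN_biUnion_le D _ hδ).trans (Finset.sum_le_card_nsmul _ _ _ fun w hw => ?_)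
  refine (coverN_wordMap_image_le hr hS A w hδ).trans (coverN_anti one_pos ?_)
  rw [one_le_div (wordRatio_pos hr w)]
  exact hD w hw

variable [Fintype ι]

lemma coverN_biUnion_wordMap_le_mul (hr : ∀ i, r i ∈ Ioo 0 1)
    (hS : ∀ i x y, dist (S i x) (S i y) = r i * dist x y) {t c δ : ℝ}
    (ht : ∑ i, r i ^ t ≤ 1) (hc : 0 ≤ c) (hδ : 0 < δ)
    (hC : ∀ ε ∈ Icc δ 1, (coverN C ε : ℝ) ≤ c * ε ^ (-t))
    {K : ℕ} (P : Finset (List ι)) (hP : ∀ w ∈ P, w.length < K ∧ δ ≤ wordRatio r w) :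
    (coverN (⋃ w ∈ P, wordMap S w '' C) δ : ℝ) ≤ c * δ ^ (-t) * K := by
  have hr0 : ∀ i, 0 < r i := fun i => (hr i).1
  calc (coverN (⋃ w ∈ P, wordMap S w '' C) δ : ℝ)
      ≤ ∑ w ∈ P, (coverN C (δ / wordRatio r w) : ℝ) := by
        exact_mod_cast (coverN_biUnion_le P _ hδ).trans
          (Finset.sum_le_sum fun w _ => coverN_wordMap_image_le hr0 hS C w hδ)
    _ ≤ ∑ w ∈ P, c * δ ^ (-t) * wordRatio r w ^ t := by
        refine Finset.sum_le_sum fun w hw => ?_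
        have hq := wordRatio_pos hr0 w
        have hq1 : wordRatio r w ≤ 1 := by
          simpa using wordRatio_le_pow (fun i => (hr0 i).le) (fun i => (hr i).2.le) w
        refine (hC _ ⟨le_div_self hδ.le hq hq1, (div_le_one hq).2 (hP w hw).2⟩).trans_eq ?_
        rw [Real.div_rpow hδ.le hq.le, Real.rpow_neg hq.le, div_inv_eq_mul, mul_assoc]
    _ = c * δ ^ (-t) * ∑ w ∈ P, wordRatio r w ^ t := (Finset.mul_sum ..).symm
    _ ≤ c * δ ^ (-t) * K := by
        gcongr
        exact sum_wordRatio_rpow_le (fun i => (hr0 i).le) ht P fun w hw => (hP w hw).1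

variable {s : ℝ}

theorem coverN_le_of_eq_union (hr : ∀ i, r i ∈ Ioo 0 1)
    (hS : ∀ i x y, dist (S i x) (S i y) = r i * dist x y) (hs : ∑ i, r i ^ s = 1)
    (hF : F = (⋃ i, S i '' F) ∪ C) {ρ R δ t c : ℝ} (hρ : 0 < ρ) (hR : R ∈ Ioo 0 1)
    (hρr : ∀ i, ρ ≤ r i) (hrR : ∀ i, r i ≤ R) (hδ : δ ∈ Ioo 0 1) (hst : s ≤ t)
    (hC : ∀ ε ∈ Icc δ 1, (coverN C ε : ℝ) ≤ c * ε ^ (-t)) :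
    (coverN F δ : ℝ) ≤ (coverN F 1 * ρ ^ (-s) + c) * (Real.logb R δ + 2) * δ ^ (-t) := by
  obtain ⟨hδ0, hδ1⟩ := hδ
  have hr0 : ∀ i, 0 ≤ r i := fun i => (hr i).1.le
  have hs0 : 0 ≤ s := nonneg_of_sum_rpow_eq_one hr hs
  have hc : 0 ≤ c := by simpa using (Nat.cast_nonneg _).trans (hC 1 ⟨hδ1.le, le_rfl⟩)
  obtain ⟨K, hRK, hKL⟩ := exists_pow_lt_and_le_logb_add_one hR ⟨hδ0, hδ1⟩
  obtain ⟨D, P, hD, hP, hcover⟩ :=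
    exists_finset_subset_biUnion_wordMap hr0 hF hρ.le hρr hrR hδ0 hδ1.le hRK
  have hρδ : 0 < ρ * δ := mul_pos hρ hδ0
  have hDcard : (D.card : ℝ) ≤ (K + 1) * ρ ^ (-s) * δ ^ (-t) := by
    calc (D.card : ℝ) ≤ (K + 1) * (ρ * δ) ^ (-s) := by
          rw [Real.rpow_neg hρδ.le, ← div_eq_mul_inv, le_div_iff₀ (by positivity)]
          exact_mod_cast card_mul_rpow_le hr0 hs.le hs0 hρδ.le D fun w hw =>
            ⟨(hD w hw).1, (hD w hw).2.1⟩
      _ = (K + 1) * ρ ^ (-s) * δ ^ (-s) := by rw [Real.mul_rpow hρ.le hδ0.le, mul_assoc]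
      _ ≤ (K + 1) * ρ ^ (-s) * δ ^ (-t) := mul_le_mul_of_nonneg_left
          (Real.rpow_le_rpow_of_exponent_ge hδ0 hδ1.le (neg_le_neg hst)) (by positivity)
  have hFD := coverN_biUnion_wordMap_le_card_mul (fun i => (hr i).1) hS F D hδ0 fun w hw =>
    (hD w hw).2.2.le
  have hCP := coverN_biUnion_wordMap_le_mul hr hS (hs ▸ Finset.sum_le_sum fun i _ =>
    Real.rpow_le_rpow_of_exponent_ge (hr i).1 (hr i).2.le hst) hc hδ0 hC P hP
  calc (coverN F δ : ℝ)
      ≤ coverN (⋃ w ∈ D, wordMap S w '' F) δ + coverN (⋃ w ∈ P, wordMap S w '' C) δ := by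
        exact_mod_cast (coverN_mono hcover hδ0).trans (coverN_union_le hδ0)
    _ ≤ (K + 1) * ρ ^ (-s) * δ ^ (-t) * coverN F 1 + c * δ ^ (-t) * (K + 1) := by
        gcongr
        · exact (Nat.cast_le.2 hFD).trans_eq (Nat.cast_mul _ _) |>.trans (by gcongr)
        · exact hCP.trans (mul_le_mul_of_nonneg_left (by linarith)
            (mul_nonneg hc (Real.rpow_nonneg hδ0.le _)))
    _ = (coverN F 1 * ρ ^ (-s) + c) * (K + 1) * δ ^ (-t) := by ring
    _ ≤ (coverN F 1 * ρ ^ (-s) + c) * (Real.logb R δ + 2) * δ ^ (-t) := by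
        gcongr ?_ * _
        exact mul_le_mul_of_nonneg_left (by linarith) (by positivity)

theorem eventually_boxRatio_le_of_eq_union (hr : ∀ i, r i ∈ Ioo 0 1)
    (hS : ∀ i x y, dist (S i x) (S i y) = r i * dist x y) (hs : ∑ i, r i ^ s = 1)
    (hF : F = (⋃ i, S i '' F) ∪ C) (hFne : F.Nonempty) {η : ℝ} (hη : 0 < η) :
    ∀ᶠ δ in 𝓝[>] 0, ∀ t c : ℝ, s ≤ t → 1 ≤ c →
      (∀ ε ∈ Icc δ 1, (coverN C ε : ℝ) ≤ c * ε ^ (-t)) →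
        boxRatio F δ ≤ t + Real.log c / (-Real.log δ) + η := by
  obtain ⟨i, -, -⟩ := Finset.exists_ne_zero_of_sum_ne_zero (hs.trans_ne one_ne_zero)
  have : Nonempty ι := ⟨i⟩
  obtain ⟨i₀, hi₀⟩ := Finite.exists_min r
  obtain ⟨i₁, hi₁⟩ := Finite.exists_max r
  have hρs : 0 ≤ r i₀ ^ (-s) := Real.rpow_nonneg (hr i₀).1.le _
  set A := (coverN F 1 : ℝ) * r i₀ ^ (-s) + 1
  have hA : 0 < A := by positivity
  filter_upwards [Ioo_mem_nhdsGT one_pos,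
    (tendsto_log_mul_logb_add_div_neg_log hA (hr i₁) 2).eventually (ge_mem_nhds hη)]
    with δ hδ hδη t c hst hc hC
  have hL : 0 < Real.logb (r i₁) δ + 2 := by
    linarith [Real.logb_nonneg_of_base_lt_one (hr i₁).1 (hr i₁).2 hδ.1 hδ.2.le]
  have hN := coverN_le_of_eq_union hr hS hs hF (hr i₀).1 (hr i₁) hi₀ hi₁ hδ hst hC
  have hbound : (coverN F δ : ℝ) ≤ c * (A * (Real.logb (r i₁) δ + 2)) * δ ^ (-t) := by
    refine hN.trans (mul_le_mul_of_nonneg_right ?_ (Real.rpow_nonneg hδ.1.le _))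
    rw [← mul_assoc]
    refine mul_le_mul_of_nonneg_right ?_ hL.le
    nlinarith [show (0 : ℝ) ≤ coverN F 1 * r i₀ ^ (-s) by positivity]
  have hc0 : 0 < c := one_pos.trans_le hc
  have := boxRatio_le_of_coverN_le hδ (coverN_pos hFne hδ.1) (by positivity) hbound
  rw [Real.log_mul hc0.ne' (by positivity), add_div] at this
  linarith

theorem eventually_boxRatio_le_of_ubDim_lt (hr : ∀ i, r i ∈ Ioo 0 1)
    (hS : ∀ i x y, dist (S i x) (S i y) = r i * dist x y) (hs : ∑ i, r i ^ s = 1)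
    (hF : F = (⋃ i, S i '' F) ∪ C) (hCne : C.Nonempty)
    (hB : IsBoundedUnder (· ≤ ·) (𝓝[>] 0) (boxRatio C)) (hsC : s ≤ ubDim C) {u : ℝ}
    (hu : ubDim C < u) : ∀ᶠ δ in 𝓝[>] 0, boxRatio F δ ≤ u := by
  obtain ⟨t, hdt, htu⟩ := exists_between hu
  have hFne : F.Nonempty := hCne.mono (hF ▸ subset_union_right)
  obtain ⟨c, hc, hC⟩ := exists_coverN_le_mul_rpow
    (by linarith [nonneg_of_sum_rpow_eq_one hr hs] : 0 ≤ t)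
    ((eventually_lt_of_limsup_lt hdt hB).mono fun _ => le_of_lt)
  have hlog : ∀ᶠ δ in 𝓝[>] 0, Real.log c / (-Real.log δ) ≤ (u - t) / 2 :=
    (tendsto_const_nhds.div_atTop (tendsto_neg_atBot_atTop.comp Real.tendsto_log_nhdsGT_zero)
      ).eventually (ge_mem_nhds (by linarith))
  filter_upwards [eventually_boxRatio_le_of_eq_union hr hS hs hF hFne (η := (u - t) / 2)
    (by linarith), hlog, self_mem_nhdsWithin] with δ hδ hδc hδ0
  linarith [hδ t c (by linarith) hc fun ε hε => hC ε ⟨hδ0.trans_le hε.1, hε.2⟩]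

end Attractor

theorem box_dim_inhomogeneous_of_boxDim_condensation_ge_general
    {X : Type*} [MetricSpace X] [CompactSpace X] {N : ℕ}
    (S : Fin N → X → X) (r : Fin N → ℝ)
    (hr : ∀ i, r i ∈ Set.Ioo (0 : ℝ) 1)
    (hS : ∀ i x y, dist (S i x) (S i y) = r i * dist x y)
    (s : ℝ) (hs : ∑ i, r i ^ s = 1)
    (C : Set X) (hCne : C.Nonempty)
    (FC : Set X)
    (hFC : FC = (⋃ i, S i '' FC) ∪ C)
    (hdimC : lbDim C = ubDim C) (hsC : s ≤ ubDim C) :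
    lbDim FC = ubDim FC ∧ ubDim FC = ubDim C := by
  have hCFC : C ⊆ FC := hFC ▸ subset_union_right
  have hCF := eventually_boxRatio_le_of_subset hCne hCFC
  by_cases hB : IsBoundedUnder (· ≤ ·) (𝓝[>] 0) (boxRatio C)
  · exact liminf_eq_limsup_of_le_of_eventually_le ⟨0, eventually_boxRatio_nonneg C⟩ hdimC hCF
      fun u hu => eventually_boxRatio_le_of_ubDim_lt hr hS hs hFC hCne hB hsC hu
  · -- `ubDim C` is then the junk value `0`, forcing `s = 0` and `N = 1`.
    have hs0 : s = 0 := le_antisymm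
      (hsC.trans (Real.limsup_eq_zero_of_not_isBoundedUnder hB).le)
      (nonneg_of_sum_rpow_eq_one hr hs)
    have hFC_le : ∀ η > 0, ∀ᶠ δ in 𝓝[>] 0, boxRatio FC δ ≤ boxRatio C δ + η := fun η hη => by
      filter_upwards [eventually_boxRatio_le_of_eq_union hr hS hs hFC (hCne.mono hCFC) hη,
        self_mem_nhdsWithin] with δ hδ hδ0
      simpa [hs0, boxRatio] using hδ 0 (coverN C δ) hs0.le (by exact_mod_cast coverN_pos hCne hδ0)
        fun ε hε => by simpa using coverN_anti hδ0 hε.1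
    rw [lbDim_eq_liminf_boxRatio, ubDim_eq_limsup_boxRatio, ubDim_eq_limsup_boxRatio,
      liminf_eq_of_le_of_le_add hCF hFC_le, limsup_eq_of_le_of_le_add hCF hFC_le]
    exact ⟨hdimC, rfl⟩

theorem box_dim_inhomogeneous_of_boxDim_condensation_ge
    {X : Type*} [MetricSpace X] [CompactSpace X] {N : ℕ} (hN : 0 < N)
    (S : Fin N → X → X) (r : Fin N → ℝ)
    (hr : ∀ i, r i ∈ Set.Ioo (0 : ℝ) 1)
    (hS : ∀ i x y, dist (S i x) (S i y) = r i * dist x y)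
    (s : ℝ) (hs : ∑ i, r i ^ s = 1)
    (C : Set X) (hC : IsCompact C) (hCne : C.Nonempty)
    (FC : Set X) (hFCc : IsCompact FC) (hFCne : FC.Nonempty)
    (hFC : FC = (⋃ i, S i '' FC) ∪ C)
    (hdimC : lbDim C = ubDim C) (hsC : s ≤ ubDim C) :
    lbDim FC = ubDim FC ∧ ubDim FC = ubDim C :=
  box_dim_inhomogeneous_of_boxDim_condensation_ge_general S r hr hS s hs C hCne FC hFC hdimC hsC
end

section
/- Let C be a nonempty compact subset of a compact metric space and let s, t satisfy lb-dim C < s < t < ub-dim C. Then the covering regularity exponents satisfy p_t(C) ≤ (s/t)·p_s(C). -/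
open Set Filter Topology Metric MeasureTheory

/-- The `(t,δ)`-covering regularity exponent `p_{t,δ}(C)`. -/
noncomputable def cre {X : Type*} [MetricSpace X] (C : Set X) (t δ : ℝ) : ℝ :=
  sSup {p : ℝ | 0 ≤ p ∧ p ≤ 1 ∧ δ ^ (-(p * t)) ≤ (coverN C (δ ^ p) : ℝ)}

/-- The `t`-covering regularity exponent `p_t(C)`. -/
noncomputable def creT {X : Type*} [MetricSpace X] (C : Set X) (t : ℝ) : ℝ :=
  Filter.liminf (fun δ : ℝ => cre C t δ) (𝓝[>] 0)

section Aux

variable {X : Type*} [MetricSpace X] {C : Set X}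

lemma exists_fin_cover (hC : IsCompact C) {δ : ℝ} (hδ : 0 < δ) :
    ∃ n : ℕ, ∃ U : Fin n → Set X,
      (∀ i, EMetric.diam (U i) ≤ ENNReal.ofReal δ) ∧ C ⊆ ⋃ i, U i := by
  obtain ⟨T, hTfin, hTcov⟩ :=
    (Metric.totallyBounded_iff.mp hC.totallyBounded) (δ / 2) (by linarith)
  classical
  set F : Finset X := hTfin.toFinset with hF
  refine ⟨F.card, fun i => Metric.ball ((F.equivFin.symm i) : X) (δ / 2), ?_, ?_⟩
  · intro i
    have h1 : EMetric.diam (Metric.ball ((F.equivFin.symm i) : X) (δ / 2)) ≤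
        2 * ENNReal.ofReal (δ / 2) := by
      rw [← Metric.emetric_ball]
      exact EMetric.diam_ball
    have h2 : (2 : ENNReal) * ENNReal.ofReal (δ / 2) = ENNReal.ofReal δ := by
      rw [← ENNReal.ofReal_ofNat 2, ← ENNReal.ofReal_mul (by norm_num)]
      congr 1
      ring
    rw [h2] at h1
    exact h1
  · intro x hx
    obtain ⟨y, hyT, hxy⟩ := Set.mem_iUnion₂.mp (hTcov hx)
    have hyF : y ∈ F := by simpa [hF] using hyT
    refine Set.mem_iUnion.mpr ⟨F.equivFin ⟨y, hyF⟩, ?_⟩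
    simpa using hxy

lemma coverN_one_le (hC : IsCompact C) (hCne : C.Nonempty) {δ : ℝ} (hδ : 0 < δ) :
    1 ≤ coverN C δ := by
  have hne : {n : ℕ | ∃ U : Fin n → Set X,
      (∀ i, EMetric.diam (U i) ≤ ENNReal.ofReal δ) ∧ C ⊆ ⋃ i, U i}.Nonempty := by
    obtain ⟨n, U, hU, hcov⟩ := exists_fin_cover hC hδ
    exact ⟨n, U, hU, hcov⟩
  have hmem := Nat.sInf_mem hne
  rw [Nat.one_le_iff_ne_zero]
  intro h0
  rw [coverN] at h0
  rw [h0] at hmem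
  obtain ⟨U, -, hcov⟩ := hmem
  obtain ⟨x, hx⟩ := hCne
  have := hcov hx
  simp at this

lemma coverN_anti_s10 (hC : IsCompact C) {a b : ℝ} (ha : 0 < a) (hab : a ≤ b) :
    coverN C b ≤ coverN C a := by
  have hne : {n : ℕ | ∃ U : Fin n → Set X,
      (∀ i, EMetric.diam (U i) ≤ ENNReal.ofReal a) ∧ C ⊆ ⋃ i, U i}.Nonempty := by
    obtain ⟨n, U, hU, hcov⟩ := exists_fin_cover hC ha
    exact ⟨n, U, hU, hcov⟩
  have hmem := Nat.sInf_mem hne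
  obtain ⟨U, hU, hcov⟩ := hmem
  exact Nat.sInf_le ⟨U, fun i => (hU i).trans (ENNReal.ofReal_le_ofReal hab), hcov⟩

lemma zero_mem_creSet (hC : IsCompact C) (hCne : C.Nonempty) (t δ : ℝ) :
    (0 : ℝ) ∈ {p : ℝ | 0 ≤ p ∧ p ≤ 1 ∧ δ ^ (-(p * t)) ≤ (coverN C (δ ^ p) : ℝ)} := by
  refine ⟨le_refl 0, zero_le_one, ?_⟩
  simp only [zero_mul, neg_zero, Real.rpow_zero]
  exact_mod_cast coverN_one_le hC hCne one_pos

lemma creSet_bddAbove (C : Set X) (t δ : ℝ) :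
    BddAbove {p : ℝ | 0 ≤ p ∧ p ≤ 1 ∧ δ ^ (-(p * t)) ≤ (coverN C (δ ^ p) : ℝ)} :=
  ⟨1, fun _ hp => hp.2.1⟩

lemma cre_nonneg (hC : IsCompact C) (hCne : C.Nonempty) (t δ : ℝ) : 0 ≤ cre C t δ :=
  le_csSup (creSet_bddAbove C t δ) (zero_mem_creSet hC hCne t δ)

lemma cre_le_one (hC : IsCompact C) (hCne : C.Nonempty) (t δ : ℝ) : cre C t δ ≤ 1 :=
  csSup_le ⟨0, zero_mem_creSet hC hCne t δ⟩ fun _ hp => hp.2.1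

/-- Pointwise main estimate: if `cre C s δ ≤ c < 1` then `cre C t δ ≤ (s/t) * c`. -/
lemma cre_le_main (hC : IsCompact C) (hCne : C.Nonempty) {s t c δ : ℝ}
    (hs : 0 < s) (hst : s < t) (hδ0 : 0 < δ) (hδ1 : δ < 1)
    (hcs : cre C s δ ≤ c) (hc1 : c < 1) :
    cre C t δ ≤ s / t * c := by
  have ht : 0 < t := hs.trans hst
  refine csSup_le ⟨0, zero_mem_creSet hC hCne t δ⟩ ?_
  rintro p ⟨hp0, hp1, hpN⟩
  have hdp : δ ≤ δ ^ p := by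
    calc δ = δ ^ (1 : ℝ) := (Real.rpow_one δ).symm
    _ ≤ δ ^ p := Real.rpow_le_rpow_of_exponent_ge hδ0 hδ1.le hp1
  have hNpδ : (coverN C (δ ^ p) : ℝ) ≤ (coverN C δ : ℝ) := by
    exact_mod_cast coverN_anti_s10 hC hδ0 hdp
  -- Step 1 : p * t ≤ s
  have hpts : p * t ≤ s := by
    by_contra hgt
    push_neg at hgt
    have h1mem : (1 : ℝ) ∈ {q : ℝ | 0 ≤ q ∧ q ≤ 1 ∧
        δ ^ (-(q * s)) ≤ (coverN C (δ ^ q) : ℝ)} := by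
      refine ⟨zero_le_one, le_refl 1, ?_⟩
      rw [one_mul, Real.rpow_one]
      have e1 : δ ^ (-s) ≤ δ ^ (-(p * t)) :=
        Real.rpow_le_rpow_of_exponent_ge hδ0 hδ1.le (by linarith)
      linarith
    have h1le : (1 : ℝ) ≤ cre C s δ := le_csSup (creSet_bddAbove C s δ) h1mem
    linarith
  -- Step 2 : q := p * t / s is admissible for s
  have hq0 : 0 ≤ p * t / s := by positivity
  have hq1 : p * t / s ≤ 1 := by
    rw [div_le_one hs]; exact hpts
  have hqs : p * t / s * s = p * t := div_mul_cancel₀ _ hs.ne'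
  have hpq : p ≤ p * t / s := by
    rw [le_div_iff₀ hs]; nlinarith
  have hdq : δ ^ (p * t / s) ≤ δ ^ p :=
    Real.rpow_le_rpow_of_exponent_ge hδ0 hδ1.le hpq
  have hqmem : p * t / s ∈ {q : ℝ | 0 ≤ q ∧ q ≤ 1 ∧
      δ ^ (-(q * s)) ≤ (coverN C (δ ^ q) : ℝ)} := by
    refine ⟨hq0, hq1, ?_⟩
    rw [hqs]
    have hN2 : (coverN C (δ ^ p) : ℝ) ≤ (coverN C (δ ^ (p * t / s)) : ℝ) := by
      exact_mod_cast coverN_anti_s10 hC (Real.rpow_pos_of_pos hδ0 _) hdq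
    linarith
  have hqle : p * t / s ≤ c := (le_csSup (creSet_bddAbove C s δ) hqmem).trans hcs
  rw [div_le_iff₀ hs] at hqle
  rw [div_mul_eq_mul_div, le_div_iff₀ ht]
  nlinarith

/-- Pointwise estimate at scales where `N(δ) < δ^{-s}`. -/
lemma cre_le_ratio (hC : IsCompact C) (hCne : C.Nonempty) {s t δ : ℝ}
    (hs : 0 < s) (hst : s < t) (hδ0 : 0 < δ) (hδ1 : δ < 1)
    (hN : (coverN C δ : ℝ) < δ ^ (-s)) :
    cre C t δ ≤ s / t := by
  have ht : 0 < t := hs.trans hst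
  refine csSup_le ⟨0, zero_mem_creSet hC hCne t δ⟩ ?_
  rintro p ⟨hp0, hp1, hpN⟩
  have hdp : δ ≤ δ ^ p := by
    calc δ = δ ^ (1 : ℝ) := (Real.rpow_one δ).symm
    _ ≤ δ ^ p := Real.rpow_le_rpow_of_exponent_ge hδ0 hδ1.le hp1
  have hNpδ : (coverN C (δ ^ p) : ℝ) ≤ (coverN C δ : ℝ) := by
    exact_mod_cast coverN_anti_s10 hC hδ0 hdp
  have hlt : δ ^ (-(p * t)) < δ ^ (-s) := by linarith
  have := (Real.rpow_lt_rpow_left_iff_of_base_lt_one hδ0 hδ1).mp hlt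
  rw [le_div_iff₀ ht]
  nlinarith

lemma lbDim_nonneg (hC : IsCompact C) (hCne : C.Nonempty) : 0 ≤ lbDim C := by
  rw [lbDim, liminf_eq]
  set A := {a : ℝ | ∀ᶠ δ in 𝓝[>] (0 : ℝ),
      a ≤ Real.log (coverN C δ) / (-Real.log δ)} with hA
  by_cases hb : BddAbove A
  · refine le_csSup hb ?_
    have hev : ∀ᶠ δ in 𝓝[>] (0 : ℝ), δ ∈ Ioo (0 : ℝ) 1 :=
      Ioo_mem_nhdsGT_of_mem ⟨le_refl 0, one_pos⟩
    filter_upwards [hev] with δ hδ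
    have h1 : (1 : ℝ) ≤ (coverN C δ : ℝ) := by
      exact_mod_cast coverN_one_le hC hCne hδ.1
    have hlog : 0 ≤ Real.log (coverN C δ) := Real.log_nonneg h1
    have hld : 0 < -Real.log δ := by
      have := Real.log_neg hδ.1 hδ.2
      linarith
    positivity
  · rw [csSup_of_not_bddAbove hb, Real.sSup_empty]

end Aux

theorem creT_ratio_bound
    {X : Type*} [MetricSpace X] [CompactSpace X]
    (C : Set X) (hC : IsCompact C) (hCne : C.Nonempty)
    (s t : ℝ) (h1 : lbDim C < s) (h2 : s < t) (h3 : t < ubDim C) :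
    creT C t ≤ (s / t) * creT C s := by
  have hs : 0 < s := lt_of_le_of_lt (lbDim_nonneg hC hCne) h1
  have ht : 0 < t := hs.trans h2
  set l := 𝓝[>] (0 : ℝ) with hl
  set f : ℝ → ℝ := fun δ => Real.log (coverN C δ) / (-Real.log δ) with hf
  have hev : ∀ᶠ δ in l, δ ∈ Ioo (0 : ℝ) 1 :=
    Ioo_mem_nhdsGT_of_mem ⟨le_refl 0, one_pos⟩
  by_cases hcb : IsCoboundedUnder (· ≥ ·) l f
  · -- main case
    have hfreq : ∃ᶠ δ in l, f δ < s := frequently_lt_of_liminf_lt hcb h1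
    have hfreqN : ∃ᶠ δ in l, δ ∈ Ioo (0 : ℝ) 1 ∧ (coverN C δ : ℝ) < δ ^ (-s) := by
      refine (hfreq.and_eventually hev).mono ?_
      rintro δ ⟨hfd, hδ0, hδ1⟩
      refine ⟨⟨hδ0, hδ1⟩, ?_⟩
      have hld : 0 < -Real.log δ := by
        have := Real.log_neg hδ0 hδ1
        linarith
      have hN1 : (0 : ℝ) < (coverN C δ : ℝ) := by
        have : (1 : ℝ) ≤ (coverN C δ : ℝ) := by
          exact_mod_cast coverN_one_le hC hCne hδ0
        linarith
      have hlog : Real.log (coverN C δ) < s * (-Real.log δ) := by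
        rw [hf] at hfd
        exact (div_lt_iff₀ hld).mp hfd
      rw [Real.lt_rpow_iff_log_lt hN1 hδ0]
      linarith
    have hbddt : IsBoundedUnder (· ≥ ·) l (fun δ => cre C t δ) :=
      ⟨0, Filter.eventually_map.2 (Eventually.of_forall fun δ => cre_nonneg hC hCne t δ)⟩
    have hcbs : IsCoboundedUnder (· ≥ ·) l (fun δ => cre C s δ) :=
      Filter.isCoboundedUnder_ge_of_le l (x := 1) fun δ => cre_le_one hC hCne s δ
    rcases lt_or_ge (creT C s) 1 with hM | hM
    · -- creT C s < 1
      have key : ∀ c : ℝ, creT C s < c → c < 1 → creT C t ≤ s / t * c := by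
        intro c hMc hc1
        have hfr : ∃ᶠ δ in l, cre C s δ < c := frequently_lt_of_liminf_lt hcbs hMc
        refine liminf_le_of_frequently_le ?_ hbddt
        refine (hfr.and_eventually hev).mono ?_
        rintro δ ⟨hlt, hδ0, hδ1⟩
        exact cre_le_main hC hCne hs h2 hδ0 hδ1 hlt.le hc1
      by_contra hcon
      push_neg at hcon
      have hMt : creT C s < t / s * creT C t := by
        have h := mul_lt_mul_of_pos_left hcon (show (0:ℝ) < t / s by positivity)
        calc creT C s = t / s * (s / t * creT C s) := by field_simp
        _ < t / s * creT C t := h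
      set c := min ((creT C s + 1) / 2) ((creT C s + t / s * creT C t) / 2) with hc
      have hc1 : creT C s < c := by
        apply lt_min <;> nlinarith
      have hc2 : c < 1 := lt_of_le_of_lt (min_le_left _ _) (by nlinarith)
      have hc3 : c < t / s * creT C t := lt_of_le_of_lt (min_le_right _ _) (by nlinarith)
      have := key c hc1 hc2
      have : creT C t < creT C t := by
        calc creT C t ≤ s / t * c := this
        _ < s / t * (t / s * creT C t) := by
            apply mul_lt_mul_of_pos_left hc3 (by positivity)
        _ = creT C t := by field_simp
      exact absurd this (lt_irrefl _)
    · -- creT C s ≥ 1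
      have hstep : creT C t ≤ s / t := by
        refine liminf_le_of_frequently_le ?_ hbddt
        refine hfreqN.mono ?_
        rintro δ ⟨⟨hδ0, hδ1⟩, hN⟩
        exact cre_le_ratio hC hCne hs h2 hδ0 hδ1 hN
      calc creT C t ≤ s / t := hstep
      _ = s / t * 1 := (mul_one _).symm
      _ ≤ s / t * creT C s := by
          apply mul_le_mul_of_nonneg_left hM (by positivity)
  · -- degenerate case: the function tends to infinity; hypotheses contradictory
    exfalso
    have hall : ∀ b : ℝ, ∀ᶠ δ in l, b ≤ f δ := by
      intro b
      rw [Filter.IsCoboundedUnder, Filter.IsCobounded] at hcb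
      push_neg at hcb
      obtain ⟨a, ha, hab⟩ := hcb b
      have hba : b ≤ a := le_of_lt (by exact lt_of_not_ge fun h => absurd (hab) (not_lt.mpr h))
      exact (Filter.eventually_map.mp ha).mono fun δ hδ => hba.trans hδ
    have hub : ubDim C = 0 := by
      rw [ubDim, limsup_eq]
      have hemp : {a : ℝ | ∀ᶠ δ in 𝓝[>] (0 : ℝ),
          Real.log (coverN C δ) / (-Real.log δ) ≤ a} = ∅ := by
        ext a
        simp only [Set.mem_setOf_eq, Set.mem_empty_iff_false, iff_false]
        intro hle
        have hge := hall (a + 1)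
        have : ∀ᶠ δ in l, False := by
          filter_upwards [hle, hge] with δ h1 h2
          rw [hf] at h2
          linarith
        have hbot : l = ⊥ := Filter.eventually_false_iff_eq_bot.mp this
        exact (show l.NeBot by infer_instance).ne hbot
      rw [hemp, Real.sInf_empty]
    have hlb : lbDim C = 0 := by
      rw [lbDim, liminf_eq]
      have hnb : ¬ BddAbove {a : ℝ | ∀ᶠ δ in 𝓝[>] (0 : ℝ),
          a ≤ Real.log (coverN C δ) / (-Real.log δ)} := by
        rintro ⟨b, hb⟩
        have : b + 1 ≤ b := hb (hall (b + 1))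
        linarith
      rw [csSup_of_not_bddAbove hnb, Real.sSup_empty]
    rw [hub] at h3
    rw [hlb] at h1
    linarith
end
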